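/- Let m ≥ 2 and 1 ≤ t ≤ m−1. Let B = PA, where A is the adjacency matrix of the Odd graph O_{m+1} and P is the permutation matrix of the involution induced by τ_t = (1 2)···(2t−1 2t). Then the eigenvalue m of B has multiplicity at least t: for each 1 ≤ i ≤ t, the function f_{2i−1,2m+1} − f_{2i,2m+1} satisfies B(f_{2i−1,2m+1} − f_{2i,2m+1}) = m(f_{2i−1,2m+1} − f_{2i,2m+1}), and these t functions are linearly independent. -/

import Mathlib

/-!
Write `e_x` for the indicator of `x ∈ Y` on `m`-sets; then `f_{i,c} = e_i - e_c`, so the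
`k`-th vector is `e_{2k} - e_{2k+1}`. The neighbours of `Y` in the Odd graph are the `m`-subsets
of the `(m+1)`-set `Yᶜ`, and `m` of them contain a given `x ∉ Y`; hence `A e_x = m (1 - e_x)`
and `A (e_{2k} - e_{2k+1}) = -m (e_{2k} - e_{2k+1})`. The permutation matrix sends `e_x` to
`e_{τ x}` and `τ` swaps `2k` and `2k+1`, which flips the sign back.
For independence, compare the values at `W ∪ {2j}` and `W ∪ {2j+1}` for an `(m-1)`-set `W`
avoiding both points: they agree on every vector but the `j`-th.
-/

open Finset Matrix

lemma ite_and_not_eq_ite_sub_ite {R : Type*} [Ring R] (p q : Prop) [Decidable p]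
    [Decidable q] :
    (if p ∧ ¬q then (1 : R) else if q ∧ ¬p then -1 else 0)
      = (if p then 1 else 0) - (if q then 1 else 0) := by
  split_ifs <;> simp_all

lemma linearIndependent_of_forall_exists_separating {ι X K : Type*} [CommRing K]
    [NoZeroDivisors K] (v : ι → X → K)
    (hv : ∀ j, ∃ x y, v j x ≠ v j y ∧ ∀ k, k ≠ j → v k x = v k y) :
    LinearIndependent K v := by
  rw [linearIndependent_iff']
  intro s c hc j hj
  obtain ⟨x, y, hne, heq⟩ := hv j
  have hsum : ∑ k ∈ s, c k * (v k x - v k y) = c j * (v j x - v j y) :=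
    sum_eq_single_of_mem j hj fun k _ hk => by rw [heq k hk, sub_self, mul_zero]
  have hzero : ∑ k ∈ s, c k * (v k x - v k y) = 0 := by
    have hx := congrFun hc x
    have hy := congrFun hc y
    simp only [Finset.sum_apply, Pi.smul_apply, smul_eq_mul, Pi.zero_apply] at hx hy
    simp only [mul_sub, sum_sub_distrib, hx, hy, sub_zero]
  exact (mul_eq_zero.1 (hsum ▸ hzero)).resolve_right (sub_ne_zero.2 hne)

lemma Finset.card_filter_mem_powersetCard {α : Type*} [DecidableEq α] {S : Finset α} {x : α}
    {n : ℕ} (hx : x ∈ S) (hn : 1 ≤ n) :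
    #{X ∈ S.powersetCard n | x ∈ X} = (#S - 1).choose (n - 1) := by
  simpa only [singleton_subset_iff, card_singleton] using
    card_filter_powersetCard_subset {x} S n (singleton_subset_iff.2 hx) hn

lemma Finset.sum_subtype_card_ite_subset {α M : Type*} [Fintype α] [DecidableEq α]
    [AddCommMonoid M] (m : ℕ) (S : Finset α) (F : Finset α → M) :
    ∑ Z : {Y : Finset α // #Y = m}, (if Z.1 ⊆ S then F Z.1 else 0)
      = ∑ X ∈ S.powersetCard m, F X := by
  rw [← Finset.sum_subtype {X | #X = m} (by simp) (fun X => if X ⊆ S then F X else 0),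
    ← sum_filter]
  refine sum_congr ?_ fun _ _ => rfl
  ext X
  simp [and_comm]

section Slice

variable {α : Type*} [Fintype α] [DecidableEq α] {m : ℕ}

def memIndicator (x : α) : {Y : Finset α // #Y = m} → ℝ :=
  fun Y => if x ∈ Y.1 then 1 else 0

lemma mulVec_memIndicator_of_kneser (hα : Fintype.card α = 2 * m + 1) (hm : 1 ≤ m)
    {A : Matrix {Y : Finset α // #Y = m} {Y : Finset α // #Y = m} ℝ}
    (hA : ∀ Y Z, A Y Z = if Disjoint Y.1 Z.1 then 1 else 0) (x : α) :
    A *ᵥ memIndicator x = (m : ℝ) • (1 - memIndicator x) := by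
  ext Y
  have hcompl : #Y.1ᶜ = m + 1 := by rw [card_compl, Y.2]; omega
  calc (A *ᵥ memIndicator x) Y
      = ∑ Z : {Y : Finset α // #Y = m},
          if Z.1 ⊆ Y.1ᶜ then (if x ∈ Z.1 then (1 : ℝ) else 0) else 0 := by
        refine sum_congr rfl fun Z _ => ?_
        simp only [hA, memIndicator, subset_compl_iff_disjoint_left, ite_mul, one_mul, zero_mul]
    _ = #{X ∈ Y.1ᶜ.powersetCard m | x ∈ X} := by
        rw [sum_subtype_card_ite_subset m _ (fun X => if x ∈ X then (1 : ℝ) else 0), sum_boole]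
    _ = ((m : ℝ) • (1 - memIndicator x)) Y := by
        by_cases hx : x ∈ Y.1
        · have : {X ∈ Y.1ᶜ.powersetCard m | x ∈ X} = ∅ :=
            filter_eq_empty_iff.2 fun X hX hxX =>
              (mem_compl.1 ((mem_powersetCard.1 hX).1 hxX)) hx
          simp [this, memIndicator, hx]
        · rw [card_filter_mem_powersetCard (mem_compl.2 hx) hm, hcompl,
            Nat.add_sub_cancel, Nat.choose_symm_of_eq_add (by omega : m = (m - 1) + 1)]
          simp [memIndicator, hx]

lemma mulVec_memIndicator_of_perm (σ : Equiv.Perm α)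
    {P : Matrix {Y : Finset α // #Y = m} {Y : Finset α // #Y = m} ℝ}
    (hP : ∀ Y Z, P Y Z = if Y.1 = Z.1.image σ then 1 else 0) (x : α) :
    P *ᵥ memIndicator x = memIndicator (σ x) := by
  ext Y
  set W : {Y : Finset α // #Y = m} :=
    ⟨Y.1.image σ.symm, by rw [card_image_of_injective _ σ.symm.injective, Y.2]⟩
  have hW : ∀ Z : {Y : Finset α // #Y = m}, Y.1 = Z.1.image σ ↔ W = Z := by
    intro Z
    rw [Subtype.ext_iff]
    constructor
    · intro h
      simp [W, h, image_image]
    · intro h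
      simp [← h, W, image_image]
  simp only [mulVec, dotProduct, hP, hW, ite_mul, one_mul, zero_mul, sum_ite_eq, mem_univ,
    if_true]
  simp [memIndicator, W, Equiv.symm_apply_eq]

lemma mulVec_memIndicator_sub_of_swap (hα : Fintype.card α = 2 * m + 1) (hm : 1 ≤ m)
    {A P : Matrix {Y : Finset α // #Y = m} {Y : Finset α // #Y = m} ℝ}
    (hA : ∀ Y Z, A Y Z = if Disjoint Y.1 Z.1 then 1 else 0)
    (σ : Equiv.Perm α) (hP : ∀ Y Z, P Y Z = if Y.1 = Z.1.image σ then 1 else 0)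
    {a b : α} (hab : σ a = b) (hba : σ b = a) :
    (P * A) *ᵥ (memIndicator a - memIndicator b)
      = (m : ℝ) • (memIndicator a - memIndicator b) := by
  have hAab : A *ᵥ (memIndicator a - memIndicator b)
      = (m : ℝ) • (memIndicator b - memIndicator a) := by
    rw [Matrix.mulVec_sub, mulVec_memIndicator_of_kneser hα hm hA,
      mulVec_memIndicator_of_kneser hα hm hA]
    module
  rw [← Matrix.mulVec_mulVec, hAab, Matrix.mulVec_smul, Matrix.mulVec_sub,
    mulVec_memIndicator_of_perm σ hP, mulVec_memIndicator_of_perm σ hP, hab, hba]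

lemma linearIndependent_memIndicator_sub {ι : Type*}
    (hm : 1 ≤ m) (hα : m + 1 ≤ Fintype.card α) (a b : ι → α)
    (hab : Function.Injective (Sum.elim a b)) :
    LinearIndependent ℝ fun k => memIndicator (m := m) (a k) - memIndicator (b k) := by
  refine linearIndependent_of_forall_exists_separating _ fun j => ?_
  have hne : a j ≠ b j := hab.ne Sum.inl_ne_inr
  obtain ⟨W, hW, hWcard⟩ := exists_subset_card_eq (s := ({a j, b j} : Finset α)ᶜ) (n := m - 1)
    (by rw [card_compl, card_pair hne]; omega)
  have haW : a j ∉ W := fun h => mem_compl.1 (hW h) (by simp)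
  have hbW : b j ∉ W := fun h => mem_compl.1 (hW h) (by simp)
  refine ⟨⟨insert (a j) W, by rw [card_insert_of_notMem haW]; omega⟩,
    ⟨insert (b j) W, by rw [card_insert_of_notMem hbW]; omega⟩, ?_, fun k hk => ?_⟩
  · norm_num [memIndicator, hne, hne.symm, haW, hbW]
  · have h1 : a k ≠ a j := hab.ne (Sum.inl_injective.ne hk)
    have h2 : a k ≠ b j := hab.ne Sum.inl_ne_inr
    have h3 : b k ≠ a j := hab.ne Sum.inr_ne_inl
    have h4 : b k ≠ b j := hab.ne (Sum.inr_injective.ne hk)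
    simp [memIndicator, h1, h2, h3, h4]

end Slice

/-- Indices are 0-based: `τ = (0 1)(2 3)⋯(2t-2 2t-1)` and the `k`-th vector is
`f_{2k,2m} - f_{2k+1,2m}`, the paper's `f_{2i-1,2m+1} - f_{2i,2m+1}` for `i = k + 1`. -/
theorem dual_seidel_odd_graph_eigenvalue_m_multiplicity
    (m t : ℕ) (hm : 2 ≤ m) (ht2 : t ≤ m - 1)
    (τ : Equiv.Perm (Fin (2 * m + 1)))
    (hτ : ∀ x : Fin (2 * m + 1),
      (τ x).val = if x.val < 2 * t then 2 * (x.val / 2) + (1 - x.val % 2) else x.val)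
    (A P : Matrix {Y : Finset (Fin (2 * m + 1)) // Y.card = m}
                  {Y : Finset (Fin (2 * m + 1)) // Y.card = m} ℝ)
    (hA : ∀ Y Z, A Y Z = if Disjoint Y.1 Z.1 then 1 else 0)
    (hP : ∀ Y Z, P Y Z = if Y.1 = Z.1.image τ then 1 else 0)
    (f : Fin (2 * m + 1) → {Y : Finset (Fin (2 * m + 1)) // Y.card = m} → ℝ)
    (hf : ∀ (i : Fin (2 * m + 1)) (Y : {Y : Finset (Fin (2 * m + 1)) // Y.card = m}),
      f i Y = if i ∈ Y.1 ∧ (⟨2 * m, by omega⟩ : Fin (2 * m + 1)) ∉ Y.1 then 1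
        else if (⟨2 * m, by omega⟩ : Fin (2 * m + 1)) ∈ Y.1 ∧ i ∉ Y.1 then -1
        else 0)
    (g : Fin t → {Y : Finset (Fin (2 * m + 1)) // Y.card = m} → ℝ)
    (hg : ∀ k : Fin t,
      g k = f ⟨2 * k.val, by have := k.isLt; omega⟩ -
            f ⟨2 * k.val + 1, by have := k.isLt; omega⟩) :
    (∀ k : Fin t, (P * A).mulVec (g k) = (m : ℝ) • g k) ∧
    LinearIndependent ℝ g := by
  let a : Fin t → Fin (2 * m + 1) := fun k => ⟨2 * k.val, by have := k.isLt; omega⟩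
  let b : Fin t → Fin (2 * m + 1) := fun k => ⟨2 * k.val + 1, by have := k.isLt; omega⟩
  have hτa : ∀ k, τ (a k) = b k := fun k => Fin.ext <| by
    have := k.isLt; rw [hτ]; split_ifs <;> simp only [a, b] at * <;> omega
  have hτb : ∀ k, τ (b k) = a k := fun k => Fin.ext <| by
    have := k.isLt; rw [hτ]; split_ifs <;> simp only [a, b] at * <;> omega
  have hg' : g = fun k => memIndicator (a k) - memIndicator (b k) := by
    funext k Y
    rw [hg k, Pi.sub_apply, hf, hf, ite_and_not_eq_ite_sub_ite, ite_and_not_eq_ite_sub_ite]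
    simp only [memIndicator, Pi.sub_apply]
    ring
  subst hg'
  refine ⟨fun k => mulVec_memIndicator_sub_of_swap (by simp) (by omega) hA τ hP (hτa k) (hτb k),
    linearIndependent_memIndicator_sub (by omega) (by rw [Fintype.card_fin]; omega) a b ?_⟩
  rintro (i | i) (j | j) h <;> simp [a, b, Fin.ext_iff] at h ⊢ <;> omega
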